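/- arXiv:math/9905059 — 4 statements merged into one kernel-verified Lean document; each statement's English description precedes it below -/
import Mathlib

section
/- In the algebra U_q(iso_2) generated by I₂₁ and T₂ with defining relations I₂₁² T₂ − (q+q⁻¹) I₂₁ T₂ I₂₁ + T₂ I₂₁² = −T₂ and T₂² I₂₁ − (q+q⁻¹) T₂ I₂₁ T₂ + I₂₁ T₂² = 0, and T₁ := q^{1/2} I₂₁ T₂ − q^{−1/2} T₂ I₂₁, the translations q-commute: q^{1/2} T₂ T₁ − q^{−1/2} T₁ T₂ = 0. -/
/-!
Expanding the nested q-commutator `[T₂, [I, T₂]_s]_s` gives exactly minus the left-hand side of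
the cubic relation between `T₂` and `I`, the `q`-Serre relation with `q = s²`.
-/

section QCommutator

variable {K A : Type*} [Field K] [Ring A] [Algebra K A]

/-- The `q`-commutator `[x, y]_q`, written with `s = q^{1/2}`. -/
def qCommutator (s : K) (x y : A) : A := s • (x * y) - s⁻¹ • (y * x)

theorem qCommutator_qCommutator_eq_neg_serre {s : K} (hs : s ≠ 0) (a b : A) :
    qCommutator s b (qCommutator s a b) =
      -(b * b * a - (s ^ 2 + (s ^ 2)⁻¹) • (b * a * b) + a * (b * b)) := by
  simp only [qCommutator, mul_sub, sub_mul, smul_sub, smul_smul, mul_smul_comm, smul_mul_assoc,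
    mul_assoc]
  match_scalars <;> (field_simp; try ring)

end QCommutator

theorem iso2_translations_qcommute_general (A : Type*) [Ring A] [Algebra ℂ A]
    (s : ℂ) (hs : s ≠ 0) (I T₂ T₁ : A)
    (h2 : T₂ * T₂ * I - (s ^ 2 + (s ^ 2)⁻¹) • (T₂ * I * T₂) + I * (T₂ * T₂) = 0)
    (hT₁ : T₁ = s • (I * T₂) - s⁻¹ • (T₂ * I)) :
    s • (T₂ * T₁) - s⁻¹ • (T₁ * T₂) = 0 := by
  have hT₁' : T₁ = qCommutator s I T₂ := hT₁
  change qCommutator s T₂ T₁ = 0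
  rw [hT₁', qCommutator_qCommutator_eq_neg_serre hs, h2, neg_zero]

/-- In `U_q(iso_2)` with `T₁ := q^{1/2} I₂₁ T₂ - q^{-1/2} T₂ I₂₁`, the translations
q-commute: `q^{1/2} T₂ T₁ - q^{-1/2} T₁ T₂ = 0`.  Here `s = q^{1/2}`, `q = s²`. -/
theorem iso2_translations_qcommute (A : Type*) [Ring A] [Algebra ℂ A]
    (s : ℂ) (hs : s ≠ 0) (I T₂ T₁ : A)
    (h1 : I * I * T₂ - (s ^ 2 + (s ^ 2)⁻¹) • (I * T₂ * I) + T₂ * (I * I) = -T₂)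
    (h2 : T₂ * T₂ * I - (s ^ 2 + (s ^ 2)⁻¹) • (T₂ * I * T₂) + I * (T₂ * T₂) = 0)
    (hT₁ : T₁ = s • (I * T₂) - s⁻¹ • (T₂ * I)) :
    s • (T₂ * T₁) - s⁻¹ • (T₁ * T₂) = 0 :=
  iso2_translations_qcommute_general A s hs I T₂ T₁ h2 hT₁
end

section
/- Conversely, in the associative unital algebra generated by I₂₁, T₁, T₂ with the bilinear relations q^{1/2} I₂₁ T₂ − q^{−1/2} T₂ I₂₁ = T₁, q^{1/2} T₁ I₂₁ − q^{−1/2} I₂₁ T₁ = T₂, and q^{1/2} T₂ T₁ − q^{−1/2} T₁ T₂ = 0, the trilinear relations I₂₁² T₂ − (q+q⁻¹) I₂₁ T₂ I₂₁ + T₂ I₂₁² = −T₂ and T₂² I₂₁ − (q+q⁻¹) T₂ I₂₁ T₂ + I₂₁ T₂² = 0 hold. -/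
/-!
Substituting the first relation `T₁ = [I, T₂]_q` into the other two turns them into nested
`q`-commutators, and expanding a nested `q`-commutator gives exactly a `q`-Serre expression
`x²y - (q + q⁻¹) xyx + yx²`: the cross terms carry the factor `s · s⁻¹ = 1`, the middle ones
`s² + s⁻² = q + q⁻¹`.
-/

section QCommutator

variable {K A : Type*} [Field K] [Ring A] [Algebra K A]

def qSerre (s : K) (x y : A) : A := x * x * y - (s ^ 2 + (s ^ 2)⁻¹) • (x * y * x) + y * (x * x)

variable {s : K}

theorem qCommutator_qCommutator_left (hs : s ≠ 0) (x y : A) :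
    qCommutator s (qCommutator s x y) x = -qSerre s x y := by
  have hss : s⁻¹ * s = 1 := inv_mul_cancel₀ hs
  simp only [qCommutator, qSerre, sub_mul, mul_sub, smul_mul_assoc, mul_smul_comm, smul_sub,
    smul_smul, mul_inv_cancel₀ hs, hss, sq, one_smul, mul_assoc]
  module

theorem qCommutator_qCommutator_right (hs : s ≠ 0) (x y : A) :
    qCommutator s y (qCommutator s x y) = -qSerre s y x := by
  have hss : s⁻¹ * s = 1 := inv_mul_cancel₀ hs
  simp only [qCommutator, qSerre, sub_mul, mul_sub, smul_mul_assoc, mul_smul_comm, smul_sub,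
    smul_smul, mul_inv_cancel₀ hs, hss, sq, one_smul, mul_assoc]
  module

end QCommutator

/-- Conversely, the three bilinear relations of `U_q(iso_2)` imply the two trilinear
defining relations.  Here `s = q^{1/2}`, `q = s²`. -/
theorem iso2_bilinear_implies_trilinear (A : Type*) [Ring A] [Algebra ℂ A]
    (s : ℂ) (hs : s ≠ 0) (I T₁ T₂ : A)
    (h1 : s • (I * T₂) - s⁻¹ • (T₂ * I) = T₁)
    (h2 : s • (T₁ * I) - s⁻¹ • (I * T₁) = T₂)
    (h3 : s • (T₂ * T₁) - s⁻¹ • (T₁ * T₂) = 0) :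
    I * I * T₂ - (s ^ 2 + (s ^ 2)⁻¹) • (I * T₂ * I) + T₂ * (I * I) = -T₂ ∧
    T₂ * T₂ * I - (s ^ 2 + (s ^ 2)⁻¹) • (T₂ * I * T₂) + I * (T₂ * T₂) = 0 := by
  change qCommutator s I T₂ = T₁ at h1
  change qCommutator s T₁ I = T₂ at h2
  change qCommutator s T₂ T₁ = 0 at h3
  rw [← h1, qCommutator_qCommutator_left hs] at h2
  rw [← h1, qCommutator_qCommutator_right hs, neg_eq_zero] at h3
  exact ⟨neg_eq_iff_eq_neg.mp h2, h3⟩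
end

section
/- Let q > 0, q ≠ 1. For half-integer m with m ≥ 1/2 and half-integer l with l > m + 1, define on the (2·(l−1/2)-type) nonclassical U'_q(so₃) module with basis |m⟩, m = 1/2, 3/2, ..., l−1, the operators: T(I₂₁)|m⟩ = ε₂ [m]₊ |m⟩, and T(I₃₂)|m⟩ = (1/(q^m − q^{−m}))(([l+m][l−m−1])^{1/2} |m+1⟩ − ([l+m−1][l−m])^{1/2} |m−1⟩) for m > 1/2, while T(I₃₂)|1/2⟩ = (1/(q^{1/2}−q^{−1/2}))(ε₃ [l−1/2] |1/2⟩ + ([l+1/2][l−3/2])^{1/2} |3/2⟩). Then these operators satisfy the defining relations of U'_q(so₃): T(I₃₂)T(I₂₁)² − (q+q⁻¹)T(I₂₁)T(I₃₂)T(I₂₁) + T(I₂₁)²T(I₃₂) = −T(I₃₂) and T(I₃₂)²T(I₂₁) − (q+q⁻¹)T(I₃₂)T(I₂₁)T(I₃₂) + T(I₂₁)T(I₃₂)² = −T(I₂₁). -/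
/-!
Extended by zero to sequences on `ℕ`, `T(I₂₁)` is the diagonal operator with entries
`a k = ε₂ [k + 1/2]₊` and `T(I₃₂)` is tridiagonal; the truncation at `n` is invisible because the
lower coefficient in row `n` carries the factor `[l - (n - 1/2) - 1] = [0] = 0`. Entrywise, the
first relation reduces to `a (k+1)² + a k² - (q + q⁻¹) a k a (k+1) = -1`, and the second to the
recurrence `a (k+2) - (q + q⁻¹) a (k+1) + a k = 0` together with the product identity
`[l+m][l-m-1] - [l+m+1][l-m-2] = [2m+2]`, whose case `m = -1/2`, `[l-1/2]² - [l+1/2][l-3/2] = 1`,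
balances the corner term `ε₃ [l - 1/2]` against the square of the off-diagonal coefficients.
-/

noncomputable section

def qDiff (q x : ℝ) : ℝ := q ^ x - q ^ (-x)

/-- `qNum q x` and `qNumPlus q x` are the paper's `[x]` and `[x]₊`. -/
def qNum (q x : ℝ) : ℝ := (q ^ x - q ^ (-x)) / (q - q⁻¹)

def qNumPlus (q x : ℝ) : ℝ := (q ^ x + q ^ (-x)) / (q - q⁻¹)

section QNumbers

variable {q : ℝ}

lemma qDiff_ne_zero (hq : 0 < q) (hq1 : q ≠ 1) {x : ℝ} (hx : x ≠ 0) : qDiff q x ≠ 0 := by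
  rw [qDiff, sub_ne_zero, Ne, Real.rpow_right_inj hq hq1]
  contrapose! hx
  linarith

lemma sub_inv_ne_zero (hq : 0 < q) (hq1 : q ≠ 1) : q - q⁻¹ ≠ 0 := by
  simpa [qDiff, Real.rpow_neg_one] using qDiff_ne_zero hq hq1 one_ne_zero

lemma sq_sub_one_ne_zero (hq : 0 < q) (hq1 : q ≠ 1) : q ^ 2 - 1 ≠ 0 := by
  contrapose! hq1
  nlinarith

lemma qNum_nonneg (hq : 0 < q) {x : ℝ} (hx : 0 ≤ x) : 0 ≤ qNum q x := by
  rcases lt_trichotomy q 1 with hlt | rfl | hgt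
  · apply div_nonneg_of_nonpos
    · linarith [Real.rpow_le_rpow_of_exponent_ge hq hlt.le (by linarith : -x ≤ x)]
    · linarith [one_lt_inv_iff₀.2 ⟨hq, hlt⟩]
  · simp [qNum]
  · apply div_nonneg
    · linarith [Real.rpow_le_rpow_of_exponent_le hgt.le (by linarith : -x ≤ x)]
    · linarith [inv_lt_one_of_one_lt₀ hgt]

lemma qNum_zero : qNum q 0 = 0 := by simp [qNum]

lemma qNum_one (hq : 0 < q) (hq1 : q ≠ 1) : qNum q 1 = 1 := by
  rw [qNum, Real.rpow_one, Real.rpow_neg_one, div_self (sub_inv_ne_zero hq hq1)]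

lemma qNumPlus_neg (x : ℝ) : qNumPlus q (-x) = qNumPlus q x := by
  rw [qNumPlus, qNumPlus, neg_neg, add_comm]

variable (hq : 0 < q) (hq1 : q ≠ 1)
include hq hq1

lemma qDiff_mul_qNumPlus (x : ℝ) : qDiff q x * qNumPlus q x = qNum q (2 * x) := by
  have := sq_sub_one_ne_zero hq hq1
  simp only [qDiff, qNum, qNumPlus, two_mul, Real.rpow_add hq, Real.rpow_neg hq.le]
  field_simp
  ring

lemma qDiff_half_mul_qNumPlus_half : qDiff q (1 / 2) * qNumPlus q (1 / 2) = 1 := by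
  rw [qDiff_mul_qNumPlus hq hq1, mul_one_div_cancel two_ne_zero, qNum_one hq hq1]

lemma qNumPlus_sq_add_sq (x : ℝ) :
    qNumPlus q (x + 1) ^ 2 + qNumPlus q x ^ 2 - (q + q⁻¹) * (qNumPlus q x * qNumPlus q (x + 1))
      = -1 := by
  have := sq_sub_one_ne_zero hq hq1
  simp only [qNumPlus, Real.rpow_add hq, Real.rpow_neg hq.le, Real.rpow_one]
  field_simp
  ring

lemma two_sub_mul_qNumPlus_half_sq : (2 - (q + q⁻¹)) * qNumPlus q (1 / 2) ^ 2 = -1 := by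
  have h := qNumPlus_sq_add_sq hq hq1 (-(1 / 2))
  rw [qNumPlus_neg, show -(1 / 2 : ℝ) + 1 = 1 / 2 by norm_num] at h
  linear_combination h

lemma qNumPlus_recurrence (x : ℝ) :
    qNumPlus q (x + 2) - (q + q⁻¹) * qNumPlus q (x + 1) + qNumPlus q x = 0 := by
  have := sq_sub_one_ne_zero hq hq1
  simp only [qNumPlus, Real.rpow_add hq, Real.rpow_neg hq.le, Real.rpow_one, Real.rpow_two]
  field_simp
  ring

lemma two_mul_qNumPlus_add_one_sub (x : ℝ) :
    2 * qNumPlus q (x + 1) - (q + q⁻¹) * qNumPlus q x = qDiff q x := by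
  have := sq_sub_one_ne_zero hq hq1
  simp only [qDiff, qNumPlus, Real.rpow_add hq, Real.rpow_neg hq.le, Real.rpow_one]
  field_simp
  ring

lemma two_mul_qNumPlus_sub_add_one (x : ℝ) :
    2 * qNumPlus q x - (q + q⁻¹) * qNumPlus q (x + 1) = -qDiff q (x + 1) := by
  have := sq_sub_one_ne_zero hq hq1
  simp only [qDiff, qNumPlus, Real.rpow_add hq, Real.rpow_neg hq.le, Real.rpow_one]
  field_simp
  ring

lemma qNum_mul_qNum_sub_succ (l x : ℝ) :
    qNum q (l + x) * qNum q (l - x - 1) - qNum q (l + (x + 1)) * qNum q (l - (x + 1) - 1)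
      = qNum q (2 * (x + 1)) := by
  have := sq_sub_one_ne_zero hq hq1
  simp only [qNum, two_mul, Real.rpow_add hq, Real.rpow_sub hq, Real.rpow_neg hq.le,
    Real.rpow_one]
  field_simp
  ring

end QNumbers

section TridiagonalOperators

variable {R : Type*} [CommRing R]

def zeroExtend {n : ℕ} (v : Fin n → R) (k : ℕ) : R := if h : k < n then v ⟨k, h⟩ else 0

lemma zeroExtend_val {n : ℕ} (v : Fin n → R) (j : Fin n) : zeroExtend v j = v j :=
  dif_pos j.isLt

lemma zeroExtend_of_le {n : ℕ} (v : Fin n → R) {k : ℕ} (hk : n ≤ k) : zeroExtend v k = 0 :=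
  dif_neg (by omega)

lemma zeroExtend_eq_of_apply {n : ℕ} {T : (Fin n → R) → Fin n → R} {F : (ℕ → R) → ℕ → R}
    {v : Fin n → R} (hT : ∀ j : Fin n, T v j = F (zeroExtend v) j)
    (hF : ∀ k, n ≤ k → F (zeroExtend v) k = 0) : zeroExtend (T v) = F (zeroExtend v) := by
  funext k
  by_cases hk : k < n
  · exact (dif_pos hk).trans (hT ⟨k, hk⟩)
  · exact (zeroExtend_of_le _ (not_lt.1 hk)).trans (hF k (not_lt.1 hk)).symm

def diagOp (a u : ℕ → R) (k : ℕ) : R := a k * u k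

def tridiagOp (β : R) (c e u : ℕ → R) (k : ℕ) : R :=
  (if k = 0 then β * u 0 else c k * u (k - 1)) - e k * u (k + 1)

variable {Q β : R} {a c e : ℕ → R}

theorem trilinear_rel₁ (h0 : (2 - Q) * a 0 ^ 2 = -1)
    (h1 : ∀ k, a (k + 1) ^ 2 + a k ^ 2 - Q * (a k * a (k + 1)) = -1) (u : ℕ → R) (k : ℕ) :
    tridiagOp β c e (diagOp a (diagOp a u)) k - Q * diagOp a (tridiagOp β c e (diagOp a u)) k
      + diagOp a (diagOp a (tridiagOp β c e u)) k = -tridiagOp β c e u k := by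
  rcases k with _ | k
  · simp only [tridiagOp, diagOp, if_true]
    linear_combination (β * u 0) * h0 - (e 0 * u 1) * h1 0
  · simp only [tridiagOp, diagOp, Nat.add_sub_cancel, Nat.succ_ne_zero, if_false]
    linear_combination (c (k + 1) * u k) * h1 k - (e (k + 1) * u (k + 2)) * h1 (k + 1)

theorem trilinear_rel₂ {n : ℕ}
    (h0 : (2 - Q) * β ^ 2 * a 0 - c 1 * e 0 * (2 * a 0 - Q * a 1) = -a 0)
    (h1 : a 1 + a 0 - Q * a 0 = 0)
    (h2 : ∀ k, a (k + 2) - Q * a (k + 1) + a k = 0)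
    (h3 : ∀ k, k + 1 < n → c (k + 1) * e k * (2 * a (k + 1) - Q * a k)
        + e (k + 1) * c (k + 2) * (2 * a (k + 1) - Q * a (k + 2)) = a (k + 1))
    (u : ℕ → R) {k : ℕ} (hk : k < n) :
    tridiagOp β c e (tridiagOp β c e (diagOp a u)) k
        - Q * tridiagOp β c e (diagOp a (tridiagOp β c e u)) k
      + diagOp a (tridiagOp β c e (tridiagOp β c e u)) k = -diagOp a u k := by
  rcases k with _ | _ | k
  · simp only [tridiagOp, diagOp, Nat.add_sub_cancel, if_true, Nat.succ_ne_zero, if_false]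
    linear_combination u 0 * h0 - (β * e 0 * u 1) * h1 + (e 0 * e 1 * u 2) * h2 0
  · simp only [tridiagOp, diagOp, Nat.add_sub_cancel, if_true, Nat.succ_ne_zero, if_false]
    linear_combination (c 1 * β * u 0) * h1 - u 1 * h3 0 hk + (e 1 * e 2 * u 3) * h2 1
  · simp only [tridiagOp, diagOp, Nat.add_sub_cancel, Nat.succ_ne_zero, if_false]
    linear_combination (c (k + 2) * c (k + 1) * u k) * h2 k - u (k + 2) * h3 (k + 1) hk
      + (e (k + 2) * e (k + 3) * u (k + 4)) * h2 (k + 2)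

end TridiagonalOperators

namespace Nonclassical

variable (q : ℝ)

def diag (ε₂ : ℝ) (k : ℕ) : ℝ := ε₂ * qNumPlus q (k + 1 / 2)

def lower (l : ℝ) (k : ℕ) : ℝ :=
  √(qNum q (l + ((k : ℝ) - 1 / 2)) * qNum q (l - ((k : ℝ) - 1 / 2) - 1)) / qDiff q ((k : ℝ) - 1 / 2)

def upper (l : ℝ) (k : ℕ) : ℝ :=
  √(qNum q (l + ((k : ℝ) + 3 / 2) - 1) * qNum q (l - ((k : ℝ) + 3 / 2))) / qDiff q ((k : ℝ) + 3 / 2)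

def corner (ε₃ l : ℝ) : ℝ := ε₃ * qNum q (l - 1 / 2) / (q ^ ((1 : ℝ) / 2) - q ^ (-(1 : ℝ) / 2))

def I21 (ε₂ : ℝ) {n : ℕ} (v : Fin n → ℝ) (j : Fin n) : ℝ := diag q ε₂ j * v j

def I32 (ε₃ l : ℝ) {n : ℕ} (v : Fin n → ℝ) (j : Fin n) : ℝ :=
  (if 1 ≤ (j : ℕ) then lower q l j * v ⟨j - 1, Nat.sub_lt_of_lt j.isLt⟩ else corner q ε₃ l * v j)
    - (if h : (j : ℕ) + 1 < n then upper q l j * v ⟨j + 1, h⟩ else 0)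

variable {q} {n : ℕ}

lemma zeroExtend_I21 (ε₂ : ℝ) (v : Fin n → ℝ) :
    zeroExtend (I21 q ε₂ v) = diagOp (diag q ε₂) (zeroExtend v) :=
  zeroExtend_eq_of_apply (fun j ↦ by rw [diagOp, zeroExtend_val]; rfl)
    (fun k hk ↦ by rw [diagOp, zeroExtend_of_le v hk, mul_zero])

lemma lower_eq_zero (l : ℝ) (hl : l = n + 1 / 2) : lower q l n = 0 := by
  rw [lower, show l - ((n : ℝ) - 1 / 2) - 1 = 0 by rw [hl]; ring, qNum_zero, mul_zero,
    Real.sqrt_zero, zero_div]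

lemma zeroExtend_I32 (ε₃ l : ℝ) (hl : l = n + 1 / 2) (v : Fin n → ℝ) :
    zeroExtend (I32 q ε₃ l v)
      = tridiagOp (corner q ε₃ l) (lower q l) (upper q l) (zeroExtend v) := by
  refine zeroExtend_eq_of_apply (fun j ↦ ?_) (fun k hk ↦ ?_)
  · obtain ⟨j, hj⟩ := j
    simp only [I32, tridiagOp]
    congr 1
    · rcases j with _ | j
      · simp [zeroExtend, hj]
      · simp [zeroExtend, show j < n by omega]
    · by_cases hj1 : j + 1 < n <;> simp [hj1, zeroExtend]
  · rw [tridiagOp, zeroExtend_of_le v (by omega : n ≤ k + 1), mul_zero, sub_zero]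
    split_ifs with hk0
    · rw [zeroExtend_of_le v (by omega), mul_zero]
    · rcases hk.eq_or_lt with rfl | hlt
      · rw [lower_eq_zero l hl, zero_mul]
      · rw [zeroExtend_of_le v (by omega), mul_zero]

lemma diag_eq (ε₂ : ℝ) (k : ℕ) (x : ℝ) (hx : (k : ℝ) + 1 / 2 = x) :
    diag q ε₂ k = ε₂ * qNumPlus q x := by
  rw [diag, hx]

lemma lower_succ_mul_upper (hq : 0 < q) {l : ℝ} (hl : l = n + 1 / 2) {k : ℕ} (hk : k + 1 ≤ n)
    {x : ℝ} (hx : (k : ℝ) + 1 / 2 = x) :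
    lower q l (k + 1) * upper q l k
      = qNum q (l + x) * qNum q (l - x - 1) / (qDiff q x * qDiff q (x + 1)) := by
  have hkn : (k : ℝ) + 1 ≤ n := by exact_mod_cast hk
  have hP : 0 ≤ qNum q (l + x) * qNum q (l - x - 1) :=
    mul_nonneg (qNum_nonneg hq (by rw [hl, ← hx]; positivity))
      (qNum_nonneg hq (by rw [hl, ← hx]; linarith))
  rw [lower, upper, show ((k + 1 : ℕ) : ℝ) - 1 / 2 = x by rw [← hx]; push_cast; ring,
    show (k : ℝ) + 3 / 2 = x + 1 by rw [← hx]; ring, show l + (x + 1) - 1 = l + x by ring,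
    show l - (x + 1) = l - x - 1 by ring, div_mul_div_comm, Real.mul_self_sqrt hP]

section Relations

variable (hq : 0 < q) (hq1 : q ≠ 1)
include hq hq1

lemma corner_eq (ε₃ l : ℝ) : corner q ε₃ l = ε₃ * qNum q (l - 1 / 2) * qNumPlus q (1 / 2) := by
  have hs : qDiff q (1 / 2) ≠ 0 := qDiff_ne_zero hq hq1 (by norm_num)
  rw [corner, neg_div]
  change ε₃ * qNum q (l - 1 / 2) / qDiff q (1 / 2) = _
  rw [div_eq_iff hs]
  linear_combination (-(ε₃ * qNum q (l - 1 / 2))) * qDiff_half_mul_qNumPlus_half hq hq1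

variable {ε₂ : ℝ}

lemma diag_succ_sq_add_sq (hε₂ : ε₂ ^ 2 = 1) (k : ℕ) :
    diag q ε₂ (k + 1) ^ 2 + diag q ε₂ k ^ 2 - (q + q⁻¹) * (diag q ε₂ k * diag q ε₂ (k + 1))
      = -1 := by
  rw [diag_eq ε₂ (k + 1) (k + 1 / 2 + 1) (by push_cast; ring), diag_eq ε₂ k _ rfl]
  linear_combination ε₂ ^ 2 * qNumPlus_sq_add_sq hq hq1 _ - hε₂

lemma two_sub_mul_diag_zero_sq (hε₂ : ε₂ ^ 2 = 1) : (2 - (q + q⁻¹)) * diag q ε₂ 0 ^ 2 = -1 := by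
  rw [diag_eq ε₂ 0 (1 / 2) (by norm_num)]
  linear_combination ε₂ ^ 2 * two_sub_mul_qNumPlus_half_sq hq hq1 - hε₂

lemma diag_one_add_diag_zero : diag q ε₂ 1 + diag q ε₂ 0 - (q + q⁻¹) * diag q ε₂ 0 = 0 := by
  have h := qNumPlus_recurrence hq hq1 (-(1 / 2))
  rw [qNumPlus_neg, show -(1 / 2 : ℝ) + 2 = 1 / 2 + 1 by norm_num,
    show -(1 / 2 : ℝ) + 1 = 1 / 2 by norm_num] at h
  rw [diag_eq ε₂ 1 (1 / 2 + 1) (by norm_num), diag_eq ε₂ 0 (1 / 2) (by norm_num)]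
  linear_combination ε₂ * h

lemma diag_recurrence (k : ℕ) :
    diag q ε₂ (k + 2) - (q + q⁻¹) * diag q ε₂ (k + 1) + diag q ε₂ k = 0 := by
  rw [diag_eq ε₂ (k + 2) (k + 1 / 2 + 2) (by push_cast; ring),
    diag_eq ε₂ (k + 1) (k + 1 / 2 + 1) (by push_cast; ring), diag_eq ε₂ k _ rfl]
  linear_combination ε₂ * qNumPlus_recurrence hq hq1 _

lemma two_mul_diag_succ_sub (k : ℕ) :
    2 * diag q ε₂ (k + 1) - (q + q⁻¹) * diag q ε₂ k = ε₂ * qDiff q (k + 1 / 2) := by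
  rw [diag_eq ε₂ (k + 1) (k + 1 / 2 + 1) (by push_cast; ring), diag_eq ε₂ k _ rfl]
  linear_combination ε₂ * two_mul_qNumPlus_add_one_sub hq hq1 _

lemma two_mul_diag_sub_succ (k : ℕ) :
    2 * diag q ε₂ k - (q + q⁻¹) * diag q ε₂ (k + 1) = -(ε₂ * qDiff q (k + 1 / 2 + 1)) := by
  rw [diag_eq ε₂ (k + 1) (k + 1 / 2 + 1) (by push_cast; ring), diag_eq ε₂ k _ rfl]
  linear_combination ε₂ * two_mul_qNumPlus_sub_add_one hq hq1 _

variable {ε₃ l : ℝ}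

lemma corner_lower_upper_rel (hε₃ : ε₃ ^ 2 = 1) (hl : l = n + 1 / 2) (hn : 1 ≤ n) :
    (2 - (q + q⁻¹)) * corner q ε₃ l ^ 2 * diag q ε₂ 0
        - lower q l 1 * upper q l 0 * (2 * diag q ε₂ 0 - (q + q⁻¹) * diag q ε₂ 1)
      = -diag q ε₂ 0 := by
  have hlu := lower_succ_mul_upper hq hl hn (x := 1 / 2) (by norm_num)
  have hH := qNum_mul_qNum_sub_succ hq hq1 l (-(1 / 2))
  rw [show -(1 / 2 : ℝ) + 1 = 1 / 2 by norm_num, show (2 : ℝ) * (1 / 2) = 1 by norm_num,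
    qNum_one hq hq1, show l + -(1 / 2) = l - 1 / 2 by ring,
    show l - -(1 / 2) - 1 = l - 1 / 2 by ring] at hH
  have hW := two_mul_diag_sub_succ hq hq1 (ε₂ := ε₂) 0
  simp only [Nat.cast_zero, zero_add] at hW
  have hs1 : qDiff q (1 / 2) ≠ 0 := qDiff_ne_zero hq hq1 (by norm_num)
  have hs3 : qDiff q (1 / 2 + 1) ≠ 0 := qDiff_ne_zero hq hq1 (by norm_num)
  have hsp := qDiff_half_mul_qNumPlus_half hq hq1
  have h2 := two_sub_mul_qNumPlus_half_sq hq hq1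
  rw [hW, hlu, corner_eq hq hq1, diag_eq ε₂ 0 (1 / 2) (by norm_num)]
  -- Turn the q-numbers into atoms, so that `field_simp` leaves their arguments alone.
  generalize qNum q (l - 1 / 2) = R at *
  generalize qNum q (l + 1 / 2) * qNum q (l - 1 / 2 - 1) = P at *
  generalize qDiff q (1 / 2) = s at *
  generalize qNumPlus q (1 / 2) = p at *
  generalize qDiff q (1 / 2 + 1) = s3 at *
  generalize q + q⁻¹ = Q at *
  field_simp
  linear_combination ε₂ * ε₃ ^ 2 * R ^ 2 * p * s * h2 + (ε₂ - ε₂ * ε₃ ^ 2 * R ^ 2) * hsp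
    - ε₂ * hH - ε₂ * R ^ 2 * hε₃

lemma lower_upper_rel (hl : l = n + 1 / 2) {k : ℕ} (hk : k + 1 < n) :
    lower q l (k + 1) * upper q l k * (2 * diag q ε₂ (k + 1) - (q + q⁻¹) * diag q ε₂ k)
        + upper q l (k + 1) * lower q l (k + 2)
          * (2 * diag q ε₂ (k + 1) - (q + q⁻¹) * diag q ε₂ (k + 2))
      = diag q ε₂ (k + 1) := by
  have hlu₀ := lower_succ_mul_upper hq hl hk.le (x := k + 1 / 2) rfl
  have hlu₁ := lower_succ_mul_upper hq hl hk (k := k + 1) (x := k + 1 / 2 + 1) (by push_cast; ring)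
  have hW₀ := two_mul_diag_succ_sub hq hq1 (ε₂ := ε₂) k
  have hW₁ := two_mul_diag_sub_succ hq hq1 (ε₂ := ε₂) (k + 1)
  rw [show ((k + 1 : ℕ) : ℝ) + 1 / 2 + 1 = k + 1 / 2 + 1 + 1 by push_cast; ring] at hW₁
  have hH := qNum_mul_qNum_sub_succ hq hq1 l (k + 1 / 2)
  have hS := qDiff_mul_qNumPlus hq hq1 (k + 1 / 2 + 1)
  have hs₀ : qDiff q (k + 1 / 2) ≠ 0 := qDiff_ne_zero hq hq1 (by positivity)
  have hs₁ : qDiff q (k + 1 / 2 + 1) ≠ 0 := qDiff_ne_zero hq hq1 (by positivity)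
  have hs₂ : qDiff q (k + 1 / 2 + 1 + 1) ≠ 0 := qDiff_ne_zero hq hq1 (by positivity)
  rw [mul_comm (upper q l (k + 1)), hW₀, hW₁, hlu₀, hlu₁,
    diag_eq ε₂ (k + 1) (k + 1 / 2 + 1) (by push_cast; ring)]
  generalize qNum q (l + (k + 1 / 2)) * qNum q (l - (k + 1 / 2) - 1) = P₀ at *
  generalize qNum q (l + (k + 1 / 2 + 1)) * qNum q (l - (k + 1 / 2 + 1) - 1) = P₁ at *
  generalize qDiff q (k + 1 / 2) = s₀ at *
  generalize qDiff q (k + 1 / 2 + 1) = s₁ at *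
  generalize qDiff q (k + 1 / 2 + 1 + 1) = s₂ at *
  generalize qNumPlus q (k + 1 / 2 + 1) = p₁ at *
  field_simp
  linear_combination ε₂ * hH - ε₂ * hS

end Relations

end Nonclassical

end

open Nonclassical

/-- The nonclassical-type finite dimensional representation `T_{ε,l}` of `U'_q(so₃)`:
on the space with basis `|m⟩`, `m = 1/2, 3/2, ..., l-1` (indexed by `j : Fin n`,
`m = j + 1/2`, `l = n + 1/2`), the operators `A = T(I₂₁)` (diagonal with eigenvalues
`ε₂ [m]₊`) and `B = T(I₃₂)` (shift operator with the displayed coefficients and the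
extra diagonal term `ε₃ [l - 1/2]/(q^{1/2} - q^{-1/2})` at `m = 1/2`) satisfy the two
trilinear defining relations of `U'_q(so₃)`. -/
theorem so3_nonclassical_rep (q : ℝ) (hq : 0 < q) (hq1 : q ≠ 1)
    (ε₂ ε₃ : ℝ) (hε₂ : ε₂ = 1 ∨ ε₂ = -1) (hε₃ : ε₃ = 1 ∨ ε₃ = -1)
    (n : ℕ) (hn : 1 ≤ n) (l : ℝ) (hl : l = n + 1 / 2)
    (br brp : ℝ → ℝ)
    (hbr : ∀ c, br c = (q ^ c - q ^ (-c)) / (q - q⁻¹))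
    (hbrp : ∀ c, brp c = (q ^ c + q ^ (-c)) / (q - q⁻¹))
    (A B : (Fin n → ℝ) → (Fin n → ℝ))
    (hA : ∀ v (j : Fin n), A v j = ε₂ * brp ((j : ℝ) + 1 / 2) * v j)
    (hB : ∀ v (j : Fin n), B v j =
      (if h : 1 ≤ (j : ℕ) then
        Real.sqrt (br (l + ((j : ℝ) - 1 / 2)) * br (l - ((j : ℝ) - 1 / 2) - 1)) /
            (q ^ ((j : ℝ) - 1 / 2) - q ^ (-((j : ℝ) - 1 / 2))) *
          v ⟨(j : ℕ) - 1, by omega⟩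
      else ε₃ * br (l - 1 / 2) / (q ^ ((1:ℝ)/2) - q ^ (-(1:ℝ)/2)) * v j)
      - (if h : (j : ℕ) + 1 < n then
        Real.sqrt (br (l + ((j : ℝ) + 3 / 2) - 1) * br (l - ((j : ℝ) + 3 / 2))) /
            (q ^ ((j : ℝ) + 3 / 2) - q ^ (-((j : ℝ) + 3 / 2))) *
          v ⟨(j : ℕ) + 1, h⟩
      else 0)) :
    (∀ v j, B (A (A v)) j - (q + q⁻¹) * A (B (A v)) j + A (A (B v)) j = -(B v j)) ∧
    (∀ v j, B (B (A v)) j - (q + q⁻¹) * B (A (B v)) j + A (B (B v)) j = -(A v j)) := by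
  obtain rfl : br = qNum q := funext hbr
  obtain rfl : brp = qNumPlus q := funext hbrp
  obtain rfl : A = I21 q ε₂ := funext₂ hA
  obtain rfl : B = I32 q ε₃ l := funext₂ hB
  have hε₂' : ε₂ ^ 2 = 1 := by rcases hε₂ with rfl | rfl <;> norm_num
  have hε₃' : ε₃ ^ 2 = 1 := by rcases hε₃ with rfl | rfl <;> norm_num
  have hA' := zeroExtend_I21 (q := q) (n := n) ε₂
  have hB' := zeroExtend_I32 (q := q) ε₃ l hl
  refine ⟨fun v j ↦ ?_, fun v j ↦ ?_⟩
  · have h := trilinear_rel₁ (β := corner q ε₃ l) (c := lower q l) (e := upper q l)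
      (two_sub_mul_diag_zero_sq hq hq1 hε₂') (diag_succ_sq_add_sq hq hq1 hε₂') (zeroExtend v) j
    simpa only [← hA', ← hB', zeroExtend_val] using h
  · have h := trilinear_rel₂ (corner_lower_upper_rel hq hq1 hε₃' hl hn)
      (diag_one_add_diag_zero (ε₂ := ε₂) hq hq1) (diag_recurrence hq hq1)
      (fun _ hk ↦ lower_upper_rel hq hq1 hl hk) (zeroExtend v) j.isLt
    simpa only [← hA', ← hB', zeroExtend_val] using h
end

section
/- For q > 0, q ≠ 1, the nonclassical one-dimensional representation of U_q(iso_n): sending I_{k+1,k} ↦ ε_{k+1}/(q^{1/2} − q^{−1/2}) for k = 1,...,n−1 and T_n ↦ 0 satisfies all defining relations of U_q(iso_n). -/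
/-! In a one-dimensional representation everything commutes, so each cubic relation
`x z² - (q + q⁻¹) z x z + z² x = -x` collapses to `x z² (q + q⁻¹ - 2) = x`. For
`z = ε / (q^{1/2} - q^{-1/2})` with `ε² = 1` this holds because
`(q^{1/2} - q^{-1/2})² = q + q⁻¹ - 2`. -/

theorem qSerre_eq_neg_of_sq_mul_sub_two_eq_one {R : Type*} [CommRing R] {Q z : R}
    (hz : z ^ 2 * (Q - 2) = 1) (x : R) :
    x * z ^ 2 - Q * (z * x * z) + z ^ 2 * x = -x := by
  linear_combination (-x) * hz

theorem div_sq_mul_eq_one {K : Type*} [Field K] {a c ε : K} (ha : a ≠ 0) (hc : a ^ 2 = c)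
    (hε : ε ^ 2 = 1) : (ε / a) ^ 2 * c = 1 := by
  rw [← hc, div_pow, hε, one_div, inv_mul_cancel₀ (pow_ne_zero 2 ha)]

namespace Real

theorem rpow_half_sub_rpow_neg_half_sq {q : ℝ} (hq : 0 < q) :
    (q ^ ((1 : ℝ) / 2) - q ^ (-(1 : ℝ) / 2)) ^ 2 = q + q⁻¹ - 2 := by
  have hneg : q ^ (-(1 : ℝ) / 2) = (q ^ ((1 : ℝ) / 2))⁻¹ := by
    rw [neg_div, rpow_neg hq.le]
  have hsq : (q ^ ((1 : ℝ) / 2)) ^ 2 = q := by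
    rw [← sqrt_eq_rpow, sq_sqrt hq.le]
  have hpos : q ^ ((1 : ℝ) / 2) ≠ 0 := (rpow_pos_of_pos hq _).ne'
  rw [hneg, sub_sq, inv_pow, hsq, mul_assoc, mul_inv_cancel₀ hpos]
  ring

theorem rpow_half_sub_rpow_neg_half_ne_zero {q : ℝ} (hq : 0 < q) (hq1 : q ≠ 1) :
    q ^ ((1 : ℝ) / 2) - q ^ (-(1 : ℝ) / 2) ≠ 0 := by
  intro h
  have h2 := rpow_half_sub_rpow_neg_half_sq hq
  rw [h, zero_pow two_ne_zero] at h2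
  have : (q - 1) ^ 2 = 0 := by
    field_simp at h2
    linear_combination -h2
  exact hq1 (sub_eq_zero.mp (pow_eq_zero_iff two_ne_zero |>.mp this))

end Real

/-- The nonclassical one-dimensional representation of `U_q(iso_n)` sending
`I_{k+1,k} ↦ ε_{k+1}/(q^{1/2} - q^{-1/2})` and `T_n ↦ 0` satisfies all the defining
relations of `U_q(iso_n)`. -/
theorem iso_n_one_dim_nonclassical (q : ℝ) (hq : 0 < q) (hq1 : q ≠ 1)
    (n : ℕ) (ε : ℕ → ℝ) (hε : ∀ k, ε k = 1 ∨ ε k = -1)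
    (x : ℕ → ℝ) (hx : ∀ k, x k = ε k / (q ^ ((1:ℝ)/2) - q ^ (-(1:ℝ)/2)))
    (t : ℝ) (ht : t = 0) :
    (∀ k, x (k + 1) * x k ^ 2 - (q + q⁻¹) * (x k * x (k + 1) * x k)
        + x k ^ 2 * x (k + 1) = -x (k + 1)) ∧
    (∀ k, x (k + 1) ^ 2 * x k - (q + q⁻¹) * (x (k + 1) * x k * x (k + 1))
        + x k * x (k + 1) ^ 2 = -x k) ∧
    (∀ k j, x k * x j = x j * x k) ∧
    (x (n - 1) ^ 2 * t - (q + q⁻¹) * (x (n - 1) * t * x (n - 1))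
        + t * x (n - 1) ^ 2 = -t) ∧
    (t ^ 2 * x (n - 1) - (q + q⁻¹) * (t * x (n - 1) * t) + x (n - 1) * t ^ 2 = 0) ∧
    (∀ k, k < n - 1 → x k * t = t * x k) := by
  have hε_sq (k : ℕ) : ε k ^ 2 = 1 := by
    rcases hε k with h | h <;> simp [h]
  have hx_sq (k : ℕ) : x k ^ 2 * ((q + q⁻¹) - 2) = 1 := by
    rw [hx]
    exact div_sq_mul_eq_one (Real.rpow_half_sub_rpow_neg_half_ne_zero hq hq1)
      (Real.rpow_half_sub_rpow_neg_half_sq hq) (hε_sq k)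
  subst ht
  refine ⟨fun k => qSerre_eq_neg_of_sq_mul_sub_two_eq_one (hx_sq k) _, fun k => ?_,
    fun k j => mul_comm _ _, by ring, by ring, fun k _ => mul_comm _ _⟩
  linear_combination qSerre_eq_neg_of_sq_mul_sub_two_eq_one (hx_sq (k + 1)) (x k)
end
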